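/- arXiv:2508.03391 — 3 statements merged into one kernel-verified Lean document; each statement's English description precedes it below -/
import Mathlib

section
/- If (b, ξ) is a feasible pair for problem P2', then f_i(ξ) ≤ max(⌈f̄_i(ξ)⌉, 1) ≤ b_i for every i ∈ {1,…,N_c}; consequently the pair (f_1(ξ),…,f_{N_c}(ξ), ξ) is also feasible for P2'. -/
open Filter

/-- `f̄ᵢ(ξ) = αᵢ / ((1 − exp((ln ξ − ln Pᵢ)/(Nᵢ−1)))·N_R)`. -/
noncomputable def fbar (NR : ℕ) (α P : ℝ) (N : ℕ) (ξ : ℝ) : ℝ :=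
  α / ((1 - Real.exp ((Real.log ξ - Real.log P) / ((N : ℝ) - 1))) * NR)

/-- `fᵢ(ξ) = min(max(⌈f̄ᵢ(ξ)⌉, 1), N_slot)`. -/
noncomputable def fstep (NR Nslot : ℕ) (α P : ℝ) (N : ℕ) (ξ : ℝ) : ℤ :=
  min (max ⌈fbar NR α P N ξ⌉ 1) (Nslot : ℤ)

/-- A pair `(b, ξ)` is feasible for problem `𝒫₂′` if `ξ > 0`, `1 ≤ bᵢ ≤ N_slot` for all `i`,
`Σᵢ bᵢ ≤ N_slot·N_b`, and `(1 − αᵢ/(N_R·bᵢ))^{Nᵢ−1}·Pᵢ ≥ ξ` for all `i`. -/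
def FeasibleP2 (Nc Nslot Nb NR : ℕ) (α P : Fin Nc → ℝ) (N : Fin Nc → ℕ)
    (b : Fin Nc → ℤ) (ξ : ℝ) : Prop :=
  0 < ξ ∧ (∀ i, 1 ≤ b i ∧ b i ≤ (Nslot : ℤ)) ∧
    (∑ i, b i) ≤ (Nslot : ℤ) * (Nb : ℤ) ∧
    ∀ i, (1 - α i / ((NR : ℝ) * (b i : ℝ))) ^ (N i - 1) * P i ≥ ξ

set_option maxHeartbeats 1000000 in
lemma key_aux (NR : ℕ) (hNR : 0 < NR) (a p : ℝ) (n : ℕ)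
    (ha0 : 0 < a) (ha1 : a < 1) (hp0 : 0 < p) (hn : 2 ≤ n)
    (ξ : ℝ) (hξ : 0 < ξ)
    (B : ℤ) (hB1 : 1 ≤ B)
    (hcon : (1 - a / ((NR : ℝ) * (B : ℝ))) ^ (n - 1) * p ≥ ξ) :
    fbar NR a p n ξ ≤ (B : ℝ) ∧ 0 < fbar NR a p n ξ ∧
      ∀ c : ℤ, fbar NR a p n ξ ≤ (c : ℝ) →
        (1 - a / ((NR : ℝ) * (c : ℝ))) ^ (n - 1) * p ≥ ξ := by
  have hNR' : (1:ℝ) ≤ (NR:ℝ) := by exact_mod_cast hNR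
  have hB' : (1:ℝ) ≤ (B:ℝ) := by exact_mod_cast hB1
  have hNB : (1:ℝ) ≤ (NR:ℝ) * B := by nlinarith
  have hfrac1 : a / ((NR:ℝ)*B) < 1 := by
    rw [div_lt_one (by linarith)]; linarith
  have hfrac0 : 0 < a / ((NR:ℝ)*B) := div_pos ha0 (by linarith)
  set s : ℝ := 1 - a / ((NR : ℝ) * (B : ℝ)) with hs
  have hs0 : 0 < s := by simp only [hs]; linarith
  have hs1 : s < 1 := by simp only [hs]; linarith
  have hspow : s ^ (n-1) < 1 := pow_lt_one₀ hs0.le hs1 (by omega)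
  have hξp : ξ < p := by nlinarith [hcon]
  have hn2 : (2:ℝ) ≤ (n:ℝ) := by exact_mod_cast hn
  have hcast : ((n - 1 : ℕ) : ℝ) = (n:ℝ) - 1 := by
    rw [Nat.cast_sub (by omega), Nat.cast_one]
  set t : ℝ := Real.exp ((Real.log ξ - Real.log p) / ((n:ℝ) - 1)) with ht
  have ht0 : 0 < t := Real.exp_pos _
  have htpow : t ^ (n-1) = ξ / p := by
    rw [ht, ← Real.exp_nat_mul, hcast, mul_div_cancel₀ _ (by linarith : (n:ℝ) - 1 ≠ 0),
      Real.exp_sub, Real.exp_log hξ, Real.exp_log hp0]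
  have htpowp : t ^ (n-1) * p = ξ := by rw [htpow]; field_simp
  have ht1 : t < 1 := by
    rw [ht, Real.exp_lt_one_iff]
    apply div_neg_of_neg_of_pos _ (by linarith)
    have := Real.log_lt_log hξ hξp
    linarith
  have hts : t ≤ s := by
    have hpowle : t ^ (n-1) ≤ s ^ (n-1) := by
      have := hcon
      rw [← htpowp] at this
      exact le_of_mul_le_mul_right this hp0
    exact le_of_pow_le_pow_left₀ (by omega) hs0.le hpowle
  have hfb : fbar NR a p n ξ = a / ((1 - t) * NR) := rfl
  have h1t : 0 < 1 - t := by linarith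
  have hden : 0 < (1 - t) * NR := by positivity
  have hfb0 : 0 < fbar NR a p n ξ := by rw [hfb]; positivity
  have hfbB : fbar NR a p n ξ ≤ (B:ℝ) := by
    rw [hfb, div_le_iff₀ hden]
    have h1 : a / ((NR:ℝ)*B) ≤ 1 - t := by simp only [hs] at hts; linarith
    rw [div_le_iff₀ (by linarith : (0:ℝ) < (NR:ℝ)*B)] at h1
    nlinarith
  refine ⟨hfbB, hfb0, fun c hc => ?_⟩
  have hc0 : (0:ℝ) < (c:ℝ) := lt_of_lt_of_le hfb0 hc
  have hNc0 : (0:ℝ) < (NR:ℝ) * c := by positivity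
  have h2 : a / ((NR:ℝ)*c) ≤ 1 - t := by
    rw [div_le_iff₀ hNc0]
    rw [hfb, div_le_iff₀ hden] at hc
    nlinarith
  have hst' : t ≤ 1 - a / ((NR:ℝ)*c) := by linarith
  have : t ^ (n-1) ≤ (1 - a / ((NR:ℝ)*c)) ^ (n-1) := pow_le_pow_left₀ ht0.le hst' _
  calc ξ = t ^ (n-1) * p := htpowp.symm
    _ ≤ (1 - a / ((NR:ℝ)*c)) ^ (n-1) * p := by nlinarith

/-- If `(b, ξ)` is feasible for `𝒫₂′`, then
`fᵢ(ξ) ≤ max(⌈f̄ᵢ(ξ)⌉, 1) ≤ bᵢ` for every `i`, and consequently the pair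
`(f₁(ξ), …, f_{N_c}(ξ), ξ)` is also feasible for `𝒫₂′`. -/
theorem fstep_le_feasible_and_feasible
    (Nc Nslot Nb NR : ℕ) (hNc : 0 < Nc) (hNslot : 0 < Nslot) (hNb : 0 < Nb) (hNR : 0 < NR)
    (α P : Fin Nc → ℝ) (N : Fin Nc → ℕ)
    (hα : ∀ i, α i ∈ Set.Ioo (0 : ℝ) 1) (hP : ∀ i, P i ∈ Set.Ioc (0 : ℝ) 1)
    (hN : ∀ i, 2 ≤ N i)
    (b : Fin Nc → ℤ) (ξ : ℝ)
    (hfeas : FeasibleP2 Nc Nslot Nb NR α P N b ξ) :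
    (∀ i, fstep NR Nslot (α i) (P i) (N i) ξ ≤ max ⌈fbar NR (α i) (P i) (N i) ξ⌉ 1 ∧
        max ⌈fbar NR (α i) (P i) (N i) ξ⌉ 1 ≤ b i) ∧
    FeasibleP2 Nc Nslot Nb NR α P N (fun i => fstep NR Nslot (α i) (P i) (N i) ξ) ξ := by

  obtain ⟨hξ, hb, hsum, hcon⟩ := hfeas
  have key : ∀ i, fbar NR (α i) (P i) (N i) ξ ≤ ((b i : ℤ) : ℝ) ∧
      0 < fbar NR (α i) (P i) (N i) ξ ∧
      ∀ c : ℤ, fbar NR (α i) (P i) (N i) ξ ≤ (c : ℝ) →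
        (1 - α i / ((NR : ℝ) * (c : ℝ))) ^ (N i - 1) * P i ≥ ξ := fun i =>
    key_aux NR hNR (α i) (P i) (N i) (hα i).1 (hα i).2 (hP i).1 (hN i) ξ hξ
      (b i) (hb i).1 (hcon i)
  have hmaxle : ∀ i, max ⌈fbar NR (α i) (P i) (N i) ξ⌉ 1 ≤ b i := fun i =>
    max_le (Int.ceil_le.mpr (key i).1) (hb i).1
  have hNslot' : (1:ℤ) ≤ (Nslot:ℤ) := by exact_mod_cast hNslot
  have hfeq : ∀ i, fstep NR Nslot (α i) (P i) (N i) ξ =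
      max ⌈fbar NR (α i) (P i) (N i) ξ⌉ 1 := fun i =>
    min_eq_left (le_trans (hmaxle i) (hb i).2)
  have hfle : ∀ i, fstep NR Nslot (α i) (P i) (N i) ξ ≤ b i := fun i =>
    (hfeq i).le.trans (hmaxle i)
  refine ⟨fun i => ⟨min_le_left _ _, hmaxle i⟩, hξ, fun i => ⟨?_, min_le_right _ _⟩, ?_, fun i => ?_⟩
  · exact le_min (le_max_right _ _) hNslot'
  · exact le_trans (Finset.sum_le_sum fun i _ => hfle i) hsum
  · apply (key i).2.2
    show fbar NR (α i) (P i) (N i) ξ ≤ ((fstep NR Nslot (α i) (P i) (N i) ξ : ℤ) : ℝ)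
    rw [hfeq i]
    calc fbar NR (α i) (P i) (N i) ξ ≤ (⌈fbar NR (α i) (P i) (N i) ξ⌉ : ℝ) := Int.le_ceil _
      _ ≤ ((max ⌈fbar NR (α i) (P i) (N i) ξ⌉ 1 : ℤ) : ℝ) := by
          exact_mod_cast le_max_left _ _
end

section
/- Suppose problem P2' is feasible with optimal value ξ* > 0. Let ξ ∈ (0, min_i P_i). (a) If f̄_i(ξ) ≤ N_slot for all i and Σ_{i=1}^{N_c} f_i(ξ) ≤ N_slot·N_b, then ξ ≤ ξ*. (b) If Σ_{i=1}^{N_c} f_i(ξ) > N_slot·N_b, then ξ > ξ*. -/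
open Filter

lemma key (NR : ℕ) (hNR : 0 < NR) (α P : ℝ) (hα : α ∈ Set.Ioo (0:ℝ) 1)
    (hP : P ∈ Set.Ioc (0:ℝ) 1) (N : ℕ) (hN : 2 ≤ N) (ξ : ℝ) (hξ0 : 0 < ξ)
    (hξP : ξ < P) (b : ℝ) (hb : 1 ≤ b) :
    ξ ≤ (1 - α / (NR * b)) ^ (N - 1) * P ↔ fbar NR α P N ξ ≤ b := by
  obtain ⟨hα0, hα1⟩ := hα
  obtain ⟨hP0, hP1⟩ := hP
  have hNR1 : (1:ℝ) ≤ NR := by exact_mod_cast hNR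
  have hb0 : (0:ℝ) < b := lt_of_lt_of_le one_pos hb
  have hNRb : (1:ℝ) ≤ NR * b := by nlinarith
  have hNRb0 : (0:ℝ) < NR * b := by linarith
  have hn1 : (0:ℝ) < (N : ℝ) - 1 := by
    have : (2:ℝ) ≤ N := by exact_mod_cast hN
    linarith
  set E := Real.exp ((Real.log ξ - Real.log P) / ((N : ℝ) - 1)) with hE
  have hE0 : 0 < E := Real.exp_pos _
  have hlog : Real.log ξ < Real.log P := Real.log_lt_log hξ0 hξP
  have hE1 : E < 1 := by
    rw [hE]
    apply Real.exp_lt_one_iff.mpr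
    exact div_neg_of_neg_of_pos (by linarith) hn1
  have ht0 : 0 < α / (NR * b) := div_pos hα0 hNRb0
  have ht1 : α / (NR * b) < 1 := by
    rw [div_lt_one hNRb0]; linarith
  have hbase : 0 < 1 - α / (NR * b) := by linarith
  have hpow : 0 < (1 - α / (NR * b)) ^ (N - 1) := pow_pos hbase _
  have hden : 0 < (1 - E) * NR := mul_pos (by linarith) (by linarith)
  constructor
  · intro h
    have hlog2 : Real.log ξ ≤ Real.log ((1 - α / (NR * b)) ^ (N - 1) * P) :=
      Real.log_le_log hξ0 h
    rw [Real.log_mul (ne_of_gt hpow) (ne_of_gt hP0), Real.log_pow] at hlog2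
    have hNn : ((N - 1 : ℕ) : ℝ) = (N : ℝ) - 1 := by
      have := Nat.cast_sub (by omega : 1 ≤ N) (R := ℝ)
      simpa using this
    rw [hNn] at hlog2
    have h3 : (Real.log ξ - Real.log P) / ((N : ℝ) - 1) ≤ Real.log (1 - α / (NR * b)) := by
      rw [div_le_iff₀ hn1]; linarith [mul_comm ((N:ℝ)-1) (Real.log (1 - α / (NR * b)))]
    have h4 : E ≤ 1 - α / (NR * b) := by
      rw [hE]
      calc Real.exp ((Real.log ξ - Real.log P) / ((N : ℝ) - 1))
          ≤ Real.exp (Real.log (1 - α / (NR * b))) := Real.exp_le_exp.mpr h3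
        _ = 1 - α / (NR * b) := Real.exp_log hbase
    have h5 : α / (NR * b) ≤ 1 - E := by linarith
    rw [div_le_iff₀ hNRb0] at h5
    unfold fbar
    rw [← hE, div_le_iff₀ hden]
    nlinarith
  · intro h
    unfold fbar at h
    rw [← hE, div_le_iff₀ hden] at h
    have h5 : α / (NR * b) ≤ 1 - E := by
      rw [div_le_iff₀ hNRb0]; nlinarith
    have h4 : E ≤ 1 - α / (NR * b) := by linarith
    have h3 : (Real.log ξ - Real.log P) / ((N : ℝ) - 1) ≤ Real.log (1 - α / (NR * b)) := by
      rw [← Real.exp_le_exp, Real.exp_log hbase]; exact h4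
    have hlog2 : Real.log ξ ≤ ((N : ℝ) - 1) * Real.log (1 - α / (NR * b)) + Real.log P := by
      rw [div_le_iff₀ hn1] at h3
      linarith [mul_comm (Real.log (1 - α / (NR * b))) ((N:ℝ)-1)]
    calc ξ = Real.exp (Real.log ξ) := (Real.exp_log hξ0).symm
      _ ≤ Real.exp (((N : ℝ) - 1) * Real.log (1 - α / (NR * b)) + Real.log P) :=
          Real.exp_le_exp.mpr hlog2
      _ = (1 - α / (NR * b)) ^ (N - 1) * P := by
          rw [Real.exp_add, Real.exp_log hP0]
          congr 1
          rw [← Real.exp_log hpow, Real.log_pow]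
          congr 1
          have hNn : ((N - 1 : ℕ) : ℝ) = (N : ℝ) - 1 := by
            have := Nat.cast_sub (by omega : 1 ≤ N) (R := ℝ)
            simpa using this
          rw [hNn]

/-- Suppose `𝒫₂′` is feasible with optimal value `ξ* > 0` and let
`ξ ∈ (0, minᵢ Pᵢ)`. (a) If `f̄ᵢ(ξ) ≤ N_slot` for all `i` and `Σᵢ fᵢ(ξ) ≤ N_slot·N_b`,
then `ξ ≤ ξ*`. (b) If `Σᵢ fᵢ(ξ) > N_slot·N_b`, then `ξ > ξ*`. -/
theorem bisection_feasibility_test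
    (Nc Nslot Nb NR : ℕ) (hNc : 0 < Nc) (hNslot : 0 < Nslot) (hNb : 0 < Nb) (hNR : 0 < NR)
    (α P : Fin Nc → ℝ) (N : Fin Nc → ℕ)
    (hα : ∀ i, α i ∈ Set.Ioo (0 : ℝ) 1) (hP : ∀ i, P i ∈ Set.Ioc (0 : ℝ) 1)
    (hN : ∀ i, 2 ≤ N i)
    (ξstar : ℝ) (hξstar : 0 < ξstar)
    (hopt : IsGreatest {ξ : ℝ | ∃ b : Fin Nc → ℤ, FeasibleP2 Nc Nslot Nb NR α P N b ξ} ξstar)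
    (ξ : ℝ) (hξ0 : 0 < ξ) (hξP : ∀ i, ξ < P i) :
    ((∀ i, fbar NR (α i) (P i) (N i) ξ ≤ (Nslot : ℝ)) →
      (∑ i, fstep NR Nslot (α i) (P i) (N i) ξ) ≤ (Nslot : ℤ) * (Nb : ℤ) → ξ ≤ ξstar) ∧
    ((∑ i, fstep NR Nslot (α i) (P i) (N i) ξ) > (Nslot : ℤ) * (Nb : ℤ) → ξ > ξstar) := by
  constructor
  · -- part (a)
    intro hbound hsum
    set b : Fin Nc → ℤ := fun i => max ⌈fbar NR (α i) (P i) (N i) ξ⌉ 1 with hbdef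
    have hble : ∀ i, b i ≤ (Nslot : ℤ) := by
      intro i
      have h1 : ⌈fbar NR (α i) (P i) (N i) ξ⌉ ≤ (Nslot : ℤ) := by
        rw [Int.ceil_le]; exact_mod_cast hbound i
      have h2 : (1 : ℤ) ≤ Nslot := by exact_mod_cast hNslot
      exact max_le h1 h2
    have hfst : ∀ i, fstep NR Nslot (α i) (P i) (N i) ξ = b i := by
      intro i
      unfold fstep
      exact min_eq_left (hble i)
    apply hopt.2
    refine ⟨b, hξ0, fun i => ⟨le_max_right _ _, hble i⟩, ?_, ?_⟩
    · calc (∑ i, b i) = ∑ i, fstep NR Nslot (α i) (P i) (N i) ξ := by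
            simp [hfst]
        _ ≤ (Nslot : ℤ) * (Nb : ℤ) := hsum
    · intro i
      have hb1 : (1 : ℝ) ≤ (b i : ℝ) := by exact_mod_cast le_max_right _ _
      rw [ge_iff_le, key NR hNR (α i) (P i) (hα i) (hP i) (N i) (hN i) ξ hξ0 (hξP i)
        ((b i : ℝ)) hb1]
      calc fbar NR (α i) (P i) (N i) ξ ≤ (⌈fbar NR (α i) (P i) (N i) ξ⌉ : ℝ) := Int.le_ceil _
        _ ≤ (b i : ℝ) := by exact_mod_cast le_max_left _ _
  · -- part (b)
    intro hsum
    by_contra hcon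
    push_neg at hcon
    obtain ⟨b, hbξ0, hbrange, hbsum, hbcon⟩ := hopt.1
    have hkey : ∀ i, fstep NR Nslot (α i) (P i) (N i) ξ ≤ b i := by
      intro i
      have hb1 : (1 : ℝ) ≤ (b i : ℝ) := by exact_mod_cast (hbrange i).1
      have hc : ξ ≤ (1 - α i / ((NR : ℝ) * (b i : ℝ))) ^ (N i - 1) * P i :=
        le_trans hcon (hbcon i)
      have hf : fbar NR (α i) (P i) (N i) ξ ≤ (b i : ℝ) :=
        (key NR hNR (α i) (P i) (hα i) (hP i) (N i) (hN i) ξ hξ0 (hξP i)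
          ((b i : ℝ)) hb1).mp hc
      have hceil : ⌈fbar NR (α i) (P i) (N i) ξ⌉ ≤ b i := Int.ceil_le.mpr hf
      unfold fstep
      exact le_trans (min_le_left _ _) (max_le hceil (hbrange i).1)
    have : (∑ i, fstep NR Nslot (α i) (P i) (N i) ξ) ≤ ∑ i, b i :=
      Finset.sum_le_sum fun i _ => hkey i
    omega
end

section
/- Let A be an n × n real symmetric positive definite matrix and let B be an m × m real symmetric positive semidefinite matrix. Then the linear map Φ : ℝ^{n×m} → ℝ^{n×m} defined by Φ(X) = A·X + X·B is bijective; in particular, A·X + X·B = 0 implies X = 0, and for every C ∈ ℝ^{n×m} there exists a unique X with A·X + X·B = C. -/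
open Matrix

lemma sylv_key {n m : ℕ}
    {A : Matrix (Fin n) (Fin n) ℝ} (hA : A.PosDef)
    {B : Matrix (Fin m) (Fin m) ℝ} (hB : B.PosSemidef)
    (X : Matrix (Fin n) (Fin m) ℝ) (h : A * X + X * B = 0) : X = 0 := by
  have hBsymm : ∀ a b, B a b = B b a := fun a b =>
    by conv_lhs => rw [← hB.isHermitian]; rw [Matrix.conjTranspose_apply, star_trivial]
  set f : Fin m → ℝ := fun j => (fun i => X i j) ⬝ᵥ A *ᵥ (fun i => X i j) with hf
  set g : Fin n → ℝ := fun i => (fun j => X i j) ⬝ᵥ B *ᵥ (fun j => X i j) with hg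
  have hfnn : ∀ j, 0 ≤ f j := fun j => by
    simpa using hA.posSemidef.dotProduct_mulVec_nonneg (fun i => X i j)
  have hgnn : ∀ i, 0 ≤ g i := fun i => by
    simpa using hB.dotProduct_mulVec_nonneg (fun j => X i j)
  have htr : Matrix.trace (Xᵀ * (A * X + X * B)) = 0 := by
    rw [h, Matrix.mul_zero, Matrix.trace_zero]
  have t1 : Matrix.trace (Xᵀ * (A * X)) = ∑ j, f j := by
    simp only [Matrix.trace, Matrix.diag, Matrix.mul_apply, dotProduct,
      Matrix.mulVec, Matrix.transpose_apply, Finset.mul_sum, hf]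
  have t2 : Matrix.trace (Xᵀ * (X * B)) = ∑ i, g i := by
    rw [Matrix.trace_mul_comm]
    simp only [Matrix.trace, Matrix.diag, Matrix.mul_apply, dotProduct,
      Matrix.mulVec, Matrix.transpose_apply, Finset.mul_sum, hg]
    apply Finset.sum_congr rfl; intro i _
    apply Finset.sum_congr rfl; intro j _
    rw [Finset.sum_mul]
    apply Finset.sum_congr rfl; intro x _
    rw [hBsymm x j]; ring
  have hsum : (∑ j, f j) + (∑ i, g i) = 0 := by
    rw [← t1, ← t2, ← Matrix.trace_add, ← Matrix.mul_add, htr]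
  have hfsum : (∑ j, f j) = 0 := by
    have h1 : 0 ≤ ∑ j, f j := Finset.sum_nonneg fun j _ => hfnn j
    have h2 : 0 ≤ ∑ i, g i := Finset.sum_nonneg fun i _ => hgnn i
    linarith
  have hfzero : ∀ j, f j = 0 := by
    intro j
    have := (Finset.sum_eq_zero_iff_of_nonneg (fun j _ => hfnn j)).mp hfsum j (Finset.mem_univ j)
    exact this
  ext i j
  by_contra hx
  have hcol : (fun i => X i j) ≠ 0 := by
    intro hc
    exact hx (by simpa using congrFun hc i)
  have := hA.dotProduct_mulVec_pos hcol
  simp only [star_trivial, RCLike.re_to_real] at this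
  rw [hf] at hfzero
  have h0 := hfzero j
  simp only at h0
  rw [h0] at this
  simp at this

/-- For `A` real symmetric positive definite and `B` real symmetric positive
semidefinite, the linear map `Φ(X) = A·X + X·B` on `ℝ^{n×m}` is bijective; in particular
`A·X + X·B = 0` implies `X = 0`, and `A·X + X·B = C` has a unique solution for every `C`. -/
theorem sylvester_map_bijective (n m : ℕ)
    (A : Matrix (Fin n) (Fin n) ℝ) (hA : A.PosDef)
    (B : Matrix (Fin m) (Fin m) ℝ) (hB : B.PosSemidef) :
    Function.Bijective (fun X : Matrix (Fin n) (Fin m) ℝ => A * X + X * B) ∧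
    (∀ X : Matrix (Fin n) (Fin m) ℝ, A * X + X * B = 0 → X = 0) ∧
    (∀ C : Matrix (Fin n) (Fin m) ℝ, ∃! X : Matrix (Fin n) (Fin m) ℝ, A * X + X * B = C) := by
  let φ : Matrix (Fin n) (Fin m) ℝ →ₗ[ℝ] Matrix (Fin n) (Fin m) ℝ :=
    { toFun := fun X => A * X + X * B
      map_add' := by
        intro X Y
        simp only [Matrix.mul_add, Matrix.add_mul]
        abel
      map_smul' := by
        intro c X
        simp [Matrix.mul_smul, Matrix.smul_mul, smul_add] }
  have hinj : Function.Injective φ := by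
    rw [injective_iff_map_eq_zero]
    intro X hX
    exact sylv_key hA hB X hX
  have hbij : Function.Bijective φ := ⟨hinj, (LinearMap.injective_iff_surjective).mp hinj⟩
  refine ⟨hbij, fun X hX => sylv_key hA hB X hX, fun C => ?_⟩
  obtain ⟨X, hX⟩ := hbij.2 C
  exact ⟨X, hX, fun Y hY => hbij.1 (hY.trans hX.symm)⟩
end
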